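/- Let μ > 0 and let M ≥ 1 be an integer. Then: (i) for every j with 1 ≤ j ≤ M−1, Σ_{(m,n) ∈ ℕ×ℕ} g_{j,2μ}(m,n)·g'_{j,2μ}(m,n) = 0 (the primed and unprimed two-mode states |ĵ_{2μ}⟩ and |ĵ'_{2μ}⟩ are orthogonal); and (ii) for j = 0, Σ_{(m,n) ∈ ℕ×ℕ} g_{0,2μ}(m,n)·g'_{0,2μ}(m,n) = P_{0|2μ}/\tildeP_{0|2μ}, their overlap coming only from the vacuum component. -/

import Mathlib

/-- Poisson probability with mean `lam`: `P_{j|lam} = e^{−lam} lam^j / j!`. -/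
noncomputable def poisson (lam : ℝ) (j : ℕ) : ℝ :=
  Real.exp (-lam) * lam ^ j / (Nat.factorial j : ℝ)

/-- `tildeP M lam j = Σ_{n=0}^∞ P_{j+Mn|lam}`. -/
noncomputable def tildeP (M : ℕ) (lam : ℝ) (j : ℕ) : ℝ :=
  ∑' n : ℕ, poisson lam (j + M * n)

/-- Two-mode coefficients of the state `|ĵ_lam⟩`. -/
noncomputable def g (M : ℕ) (lam : ℝ) (j : ℕ) (p : ℕ × ℕ) : ℝ :=
  if (p.1 + p.2) % M = j % M then
    Real.sqrt (poisson lam (p.1 + p.2) / tildeP M lam j)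
      * Real.sqrt ((Nat.factorial (p.1 + p.2) : ℝ)
          / (2 ^ (p.1 + p.2) * Nat.factorial p.1 * Nat.factorial p.2))
  else 0

/-- Two-mode coefficients of the state `|ĵ'_lam⟩`: `g'_{j,lam}(m,n) = (−1)^m g_{j,lam}(m,n)`. -/
noncomputable def g' (M : ℕ) (lam : ℝ) (j : ℕ) (p : ℕ × ℕ) : ℝ :=
  (-1 : ℝ) ^ p.1 * g M lam j p

/-- The equivalence between `Σ s, Fin (s+1)` (diagonals) and `ℕ × ℕ`. -/
def diagEquiv : (Σ s : ℕ, Fin (s + 1)) ≃ ℕ × ℕ where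
  toFun x := (x.2, x.1 - x.2)
  invFun p := ⟨p.1 + p.2, ⟨p.1, by omega⟩⟩
  left_inv := by
    rintro ⟨s, ⟨m, hm⟩⟩
    dsimp only
    have h : m + (s - m) = s := by omega
    refine Sigma.ext h ?_
    rw [Fin.heq_ext_iff (congrArg Nat.succ h)]
  right_inv := by
    rintro ⟨m, n⟩
    simp

lemma poisson_nonneg {lam : ℝ} (hlam : 0 ≤ lam) (j : ℕ) : 0 ≤ poisson lam j := by
  unfold poisson
  positivity

lemma tildeP_nonneg {M : ℕ} {lam : ℝ} (hlam : 0 ≤ lam) (j : ℕ) : 0 ≤ tildeP M lam j :=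
  tsum_nonneg fun n => poisson_nonneg hlam _

lemma key (lam : ℝ) (hlam : 0 < lam) (M : ℕ) (hM : 1 ≤ M) (j : ℕ) :
    ∑' p : ℕ × ℕ, g M lam j p * g' M lam j p =
      if 0 % M = j % M then poisson lam 0 / tildeP M lam j else 0 := by
  set T := tildeP M lam j with hT
  have hT0 : 0 ≤ T := tildeP_nonneg hlam.le j
  -- pointwise value of the product on the diagonal parametrization
  have hpt : ∀ (s : ℕ) (m : Fin (s + 1)),
      g M lam j (diagEquiv ⟨s, m⟩) * g' M lam j (diagEquiv ⟨s, m⟩) =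
        if s % M = j % M then
          (-1 : ℝ) ^ (m : ℕ) * (poisson lam s / T) * ((s.choose m : ℝ) / 2 ^ s)
        else 0 := by
    rintro s ⟨m, hm⟩
    have hms : m ≤ s := by omega
    have hsum : m + (s - m) = s := by omega
    simp only [diagEquiv, Equiv.coe_fn_mk, g, g']
    simp only [hsum]
    by_cases hc : s % M = j % M
    · simp only [hc, if_pos rfl]
      have hA : (0:ℝ) ≤ poisson lam s / T := div_nonneg (poisson_nonneg hlam.le s) hT0
      have hB : (0:ℝ) ≤ (Nat.factorial s : ℝ) / (2 ^ s * Nat.factorial m * Nat.factorial (s - m)) := by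
        positivity
      have hfac : (Nat.factorial s : ℝ) = (s.choose m : ℝ) * m.factorial * (s - m).factorial := by
        rw [← Nat.cast_mul, ← Nat.cast_mul, Nat.choose_mul_factorial_mul_factorial hms]
      have e1 : Real.sqrt (poisson lam s / T) * Real.sqrt (poisson lam s / T) = poisson lam s / T :=
        Real.mul_self_sqrt hA
      have e2 : Real.sqrt ((Nat.factorial s : ℝ) / (2 ^ s * Nat.factorial m * Nat.factorial (s - m)))
          * Real.sqrt ((Nat.factorial s : ℝ) / (2 ^ s * Nat.factorial m * Nat.factorial (s - m)))
          = (Nat.factorial s : ℝ) / (2 ^ s * Nat.factorial m * Nat.factorial (s - m)) :=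
        Real.mul_self_sqrt hB
      have e3 : (Nat.factorial s : ℝ) / (2 ^ s * Nat.factorial m * Nat.factorial (s - m))
          = (s.choose m : ℝ) / 2 ^ s := by
        rw [hfac]
        have h1 : (Nat.factorial m : ℝ) ≠ 0 := Nat.cast_ne_zero.mpr m.factorial_ne_zero
        have h2 : (Nat.factorial (s - m) : ℝ) ≠ 0 := Nat.cast_ne_zero.mpr (s - m).factorial_ne_zero
        field_simp
      calc (Real.sqrt (poisson lam s / T) * Real.sqrt _) *
            ((-1:ℝ) ^ m * (Real.sqrt (poisson lam s / T) * Real.sqrt _))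
          = (-1:ℝ) ^ m * ((Real.sqrt (poisson lam s / T) * Real.sqrt (poisson lam s / T)) *
              (Real.sqrt ((Nat.factorial s : ℝ) / (2 ^ s * Nat.factorial m * Nat.factorial (s - m)))
                * Real.sqrt ((Nat.factorial s : ℝ) / (2 ^ s * Nat.factorial m * Nat.factorial (s - m))))) := by
            ring
        _ = (-1:ℝ) ^ m * (poisson lam s / T) * ((s.choose m : ℝ) / 2 ^ s) := by
            rw [e1, e2, e3]; ring
    · simp [hc]
  -- summability
  have hGsum : Summable (fun x : Σ s : ℕ, Fin (s + 1) =>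
      poisson lam x.1 / T * ((x.1.choose x.2 : ℝ) / 2 ^ x.1)) := by
    rw [summable_sigma_of_nonneg]
    · constructor
      · intro s
        exact Summable.of_finite
      · have hfib : ∀ s : ℕ, (∑' m : Fin (s + 1),
            poisson lam s / T * ((s.choose m : ℝ) / 2 ^ s)) = poisson lam s / T := by
          intro s
          rw [tsum_fintype]
          have : (∑ m : Fin (s + 1), poisson lam s / T * ((s.choose m : ℝ) / 2 ^ s))
              = poisson lam s / T / 2 ^ s * ∑ m : Fin (s + 1), (s.choose (m : ℕ) : ℝ) := by
            rw [Finset.mul_sum]; congr 1; ext m; ring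
          rw [this, Fin.sum_univ_eq_sum_range (fun i => (s.choose i : ℝ))]
          rw [← Nat.cast_sum, Nat.sum_range_choose]
          have h2 : (2:ℝ) ^ s ≠ 0 := by positivity
          push_cast
          exact div_mul_cancel₀ _ h2
        simp only [hfib]
        have : Summable (fun s => poisson lam s) := by
          have := (Real.summable_pow_div_factorial lam).mul_left (Real.exp (-lam))
          apply this.congr
          intro s
          unfold poisson
          ring
        exact this.div_const T
    · intro x
      have := poisson_nonneg hlam.le x.1
      positivity
  have hFsum : Summable (fun x : Σ s : ℕ, Fin (s + 1) =>
      g M lam j (diagEquiv x) * g' M lam j (diagEquiv x)) := by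
    rw [← summable_abs_iff]
    apply Summable.of_nonneg_of_le (fun x => abs_nonneg _) _ hGsum
    rintro ⟨s, m⟩
    rw [hpt s m]
    by_cases hc : s % M = j % M
    · rw [if_pos hc, abs_mul, abs_mul]
      have h1 : |(-1:ℝ) ^ (m:ℕ)| = 1 := by
        rw [abs_pow, abs_neg, abs_one, one_pow]
      rw [h1, one_mul]
      have hA : (0:ℝ) ≤ poisson lam s / T := div_nonneg (poisson_nonneg hlam.le s) hT0
      have hB : (0:ℝ) ≤ (s.choose (m:ℕ) : ℝ) / 2 ^ s := by positivity
      rw [abs_of_nonneg hA, abs_of_nonneg hB]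
    · rw [if_neg hc, abs_zero]
      have := poisson_nonneg hlam.le s
      positivity
  -- main computation
  rw [← diagEquiv.tsum_eq (fun p => g M lam j p * g' M lam j p)]
  rw [hFsum.tsum_sigma]
  have hdiag : ∀ s : ℕ, (∑' m : Fin (s + 1),
      g M lam j (diagEquiv ⟨s, m⟩) * g' M lam j (diagEquiv ⟨s, m⟩)) =
      if s = 0 then (if 0 % M = j % M then poisson lam 0 / T else 0) else 0 := by
    intro s
    rw [tsum_fintype]
    by_cases hc : s % M = j % M
    · have : (∑ m : Fin (s + 1), g M lam j (diagEquiv ⟨s, m⟩) * g' M lam j (diagEquiv ⟨s, m⟩))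
          = poisson lam s / T / 2 ^ s *
            ∑ m ∈ Finset.range (s + 1), (-1 : ℝ) ^ m * (s.choose m : ℝ) := by
        rw [← Fin.sum_univ_eq_sum_range (fun i => (-1 : ℝ) ^ i * (s.choose i : ℝ)), Finset.mul_sum]
        apply Finset.sum_congr rfl
        intro m _
        rw [hpt s m, if_pos hc]
        ring
      rw [this]
      have halt : (∑ m ∈ Finset.range (s + 1), (-1 : ℝ) ^ m * (s.choose m : ℝ))
          = if s = 0 then 1 else 0 := by
        have := @Int.alternating_sum_range_choose s
        have h2 : ((∑ m ∈ Finset.range (s + 1), (-1:ℤ) ^ m * (s.choose m : ℤ) : ℤ) : ℝ)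
            = ∑ m ∈ Finset.range (s + 1), (-1 : ℝ) ^ m * (s.choose m : ℝ) := by
          push_cast
          ring
        rw [← h2, this]
        split <;> simp
      rw [halt]
      by_cases hs : s = 0
      · subst hs
        have hc0 : 0 % M = j % M := hc
        simp [hc0]
      · simp [hs]
    · have : (∑ m : Fin (s + 1), g M lam j (diagEquiv ⟨s, m⟩) * g' M lam j (diagEquiv ⟨s, m⟩))
          = 0 := by
        apply Finset.sum_eq_zero
        intro m _
        rw [hpt s m, if_neg hc]
      rw [this]
      by_cases hs : s = 0
      · subst hs
        simp only [Nat.zero_mod] at hc ⊢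
        simp [hc]
      · simp [hs]
  calc (∑' s : ℕ, ∑' m : Fin (s + 1),
        g M lam j (diagEquiv ⟨s, m⟩) * g' M lam j (diagEquiv ⟨s, m⟩))
      = ∑' s : ℕ, (if s = 0 then (if 0 % M = j % M then poisson lam 0 / T else 0) else 0) := by
        exact tsum_congr hdiag
    _ = if 0 % M = j % M then poisson lam 0 / T else 0 := by
        rw [tsum_eq_single 0 (fun s hs => by simp [hs])]
        simp

/-- (i) For `1 ≤ j ≤ M−1`, the states `|ĵ_{2μ}⟩` and `|ĵ'_{2μ}⟩` are orthogonal;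
(ii) for `j = 0`, their overlap is `P_{0|2μ}/tildeP_{0|2μ}`, coming only from the
vacuum component. -/
theorem g_g'_overlap (μ : ℝ) (hμ : 0 < μ) (M : ℕ) (hM : 1 ≤ M) :
    (∀ j : ℕ, 1 ≤ j → j ≤ M - 1 →
        ∑' p : ℕ × ℕ, g M (2 * μ) j p * g' M (2 * μ) j p = 0) ∧
      ∑' p : ℕ × ℕ, g M (2 * μ) 0 p * g' M (2 * μ) 0 p =
        poisson (2 * μ) 0 / tildeP M (2 * μ) 0 := by
  have hlam : 0 < 2 * μ := by linarith
  constructor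
  · intro j hj1 hj2
    rw [key (2 * μ) hlam M hM j]
    have h1 : j % M = j := Nat.mod_eq_of_lt (by omega)
    have h2 : 0 % M = 0 := Nat.zero_mod M
    rw [if_neg (by omega)]
  · rw [key (2 * μ) hlam M hM 0]
    simp
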